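/- arXiv:math/0605721 — 2 statements merged into one kernel-verified Lean document; each statement's English description precedes it below -/
import Mathlib

section
/- Let f: [1,∞) → ℝ be continuous and nonnegative, and let s be a complex number such that ∫₁^∞ f(x) x^{-Re s} dx < ∞. Then the identity (∫₁^∞ f(x) x^{-s} dx)² = 2 ∫₁^∞ x^{-s} ( ∫_{√x}^{x} f(u) f(x/u) du/u ) dx holds, both sides being absolutely convergent. -/
open MeasureTheory Real Complex Set

lemma contOn_cpow (s : ℂ) : ContinuousOn (fun x : ℝ => (x:ℂ) ^ (-s)) (Set.Ioi 0) := by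
  intro x hx
  exact (continuousAt_ofReal_cpow_const x (-s) (Or.inr hx.ne')).continuousWithinAt

lemma norm_cpow_neg (s : ℂ) {x : ℝ} (hx : 0 < x) : ‖(x:ℂ) ^ (-s)‖ = x ^ (-s.re) := by
  rw [Complex.norm_cpow_eq_rpow_re_of_pos hx, Complex.neg_re]

lemma g0_contOn (f : ℝ → ℝ) (hcont : ContinuousOn f (Set.Ici (1:ℝ))) {X : ℝ} (_hX : 1 ≤ X) :
    ContinuousOn (fun u => f u * f (X/u) / u) (Set.Icc 1 X) := by
  have hne : ∀ u ∈ Set.Icc (1:ℝ) X, u ≠ 0 := fun u hu => by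
    have := hu.1; positivity
  have h2 : ContinuousOn (fun u : ℝ => X / u) (Set.Icc 1 X) :=
    continuousOn_const.div continuousOn_id hne
  have h3 : ContinuousOn (fun u => f (X/u)) (Set.Icc 1 X) := by
    refine hcont.comp h2 fun u hu => ?_
    exact (one_le_div (by linarith [hu.1])).mpr hu.2
  exact ((hcont.mono Set.Icc_subset_Ici_self).mul h3).div continuousOn_id hne

lemma symm_half (f : ℝ → ℝ) (hcont : ContinuousOn f (Set.Ici (1:ℝ))) {X : ℝ} (hX : 1 ≤ X) :
    ∫ u in (1:ℝ)..X, f u * f (X/u) / u = 2 * ∫ u in Real.sqrt X..X, f u * f (X/u) / u := by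
  set r := Real.sqrt X with hr
  have hX0 : (0:ℝ) < X := by linarith
  have hr1 : 1 ≤ r := by
    rw [hr, show (1:ℝ) = Real.sqrt 1 by simp]
    exact Real.sqrt_le_sqrt hX
  have hr0 : (0:ℝ) < r := by linarith
  have hrr : r * r = X := Real.mul_self_sqrt hX0.le
  have hrX : r ≤ X := by nlinarith
  have hXr : X / r = r := by field_simp [hrr]; nlinarith [hrr]
  set g0 : ℝ → ℝ := fun u => f u * f (X/u) / u with hg0
  have g0c : ContinuousOn g0 (Set.Icc 1 X) := g0_contOn f hcont hX
  have ii1 : IntervalIntegrable g0 volume 1 r := by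
    apply (g0c.mono ?_).intervalIntegrable
    rw [Set.uIcc_of_le hr1]; exact Set.Icc_subset_Icc le_rfl hrX
  have ii2 : IntervalIntegrable g0 volume r X := by
    apply (g0c.mono ?_).intervalIntegrable
    rw [Set.uIcc_of_le hrX]; exact Set.Icc_subset_Icc hr1 le_rfl
  have key : ∫ v in (1:ℝ)..r, (-(X / v^2)) • (g0 ∘ (fun v => X / v)) v
      = ∫ u in (X/1)..(X/r), g0 u := by
    apply intervalIntegral.integral_comp_smul_deriv'' (f := fun v => X / v)
      (f' := fun v => -(X / v^2)) (g := g0)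
    · apply continuousOn_const.div continuousOn_id
      intro v hv
      rw [Set.uIcc_of_le hr1] at hv; have := hv.1; positivity
    · intro v hv
      rw [min_eq_left hr1, max_eq_right hr1] at hv
      have hv0 : v ≠ 0 := by have := hv.1; positivity
      have := (hasDerivAt_inv hv0).const_mul X
      have h2 : X * -(v^2)⁻¹ = -(X / v^2) := by field_simp
      rw [h2] at this
      exact this.hasDerivWithinAt
    · apply (continuousOn_const.div (continuousOn_pow 2) ?_).neg
      intro v hv
      rw [Set.uIcc_of_le hr1] at hv; have := hv.1; positivity
    · apply g0c.mono
      rintro _ ⟨v, hv, rfl⟩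
      rw [Set.uIcc_of_le hr1] at hv
      have hv0 : (0:ℝ) < v := by linarith [hv.1]
      constructor
      · calc (1:ℝ) ≤ r := hr1
          _ = X / r := hXr.symm
          _ ≤ X / v := by apply div_le_div_of_nonneg_left hX0.le hv0 hv.2
      · calc X / v ≤ X / 1 := by apply div_le_div_of_nonneg_left hX0.le one_pos hv.1
          _ = X := by ring
  have lhs_eq : ∫ v in (1:ℝ)..r, (-(X / v^2)) • (g0 ∘ (fun v => X / v)) v
      = ∫ v in (1:ℝ)..r, -(g0 v) := by
    apply intervalIntegral.integral_congr
    intro v hv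
    rw [Set.uIcc_of_le hr1] at hv
    have hv0 : (0:ℝ) < v := by linarith [hv.1]
    have hXv : X / v ≠ 0 := by positivity
    simp only [hg0, Function.comp, smul_eq_mul]
    rw [div_div_cancel₀]
    · field_simp
    · exact hX0.ne'
  have h12 : ∫ v in (1:ℝ)..r, g0 v = ∫ u in r..X, g0 u := by
    have := key
    rw [lhs_eq, intervalIntegral.integral_neg, hXr, div_one,
      intervalIntegral.integral_symm r X] at this
    linarith [this]
  have hsplit : ∫ u in (1:ℝ)..X, g0 u
      = (∫ u in (1:ℝ)..r, g0 u) + ∫ u in r..X, g0 u :=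
    (intervalIntegral.integral_add_adjacent_intervals ii1 ii2).symm
  rw [hsplit, h12]; ring

def Uset : Set (ℝ × ℝ) := {p | 1 < p.1} ∩ {p | p.1 < p.2}

noncomputable def Kfn (f : ℝ → ℝ) (s : ℂ) : ℝ × ℝ → ℂ :=
  fun p => ((f p.1 * f (p.2 / p.1) / p.1 : ℝ) : ℂ) * (p.2 : ℂ) ^ (-s)

lemma Uopen : IsOpen Uset :=
  (isOpen_lt continuous_const continuous_fst).inter (isOpen_lt continuous_fst continuous_snd)

lemma Umem {p : ℝ × ℝ} : p ∈ Uset ↔ 1 < p.1 ∧ p.1 < p.2 := Iff.rfl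

lemma Kcont (f : ℝ → ℝ) (hcont : ContinuousOn f (Set.Ici (1:ℝ))) (s : ℂ) :
    ContinuousOn (Kfn f s) Uset := by
  have hne : ∀ p ∈ Uset, p.1 ≠ 0 := fun p hp => by
    have := (Umem.mp hp).1; positivity
  have h1 : ContinuousOn (fun p : ℝ × ℝ => f p.1) Uset := by
    refine hcont.comp continuous_fst.continuousOn fun p hp => (Umem.mp hp).1.le
  have h2 : ContinuousOn (fun p : ℝ × ℝ => p.2 / p.1) Uset :=
    continuous_snd.continuousOn.div continuous_fst.continuousOn hne
  have h3 : ContinuousOn (fun p : ℝ × ℝ => f (p.2 / p.1)) Uset := by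
    refine hcont.comp h2 fun p hp => ?_
    obtain ⟨h1', h2'⟩ := Umem.mp hp
    exact ((one_le_div (by linarith)).mpr h2'.le)
  have h4 : ContinuousOn (fun p : ℝ × ℝ => (p.2:ℂ) ^ (-s)) Uset := by
    refine (contOn_cpow s).comp continuous_snd.continuousOn fun p hp => ?_
    obtain ⟨h1', h2'⟩ := Umem.mp hp
    exact Set.mem_Ioi.mpr (by linarith)
  exact (Complex.continuous_ofReal.comp_continuousOn
    (((h1.mul h3).div continuous_fst.continuousOn hne))).mul h4

lemma slice_right (f : ℝ → ℝ) (s : ℂ) {x : ℝ} (hx : 1 < x) :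
    (fun X => Uset.indicator (Kfn f s) (x, X))
      = (Set.Ioi x).indicator (fun X => Kfn f s (x, X)) := by
  ext X
  by_cases h : x < X
  · rw [Set.indicator_of_mem (Umem.mpr ⟨hx, h⟩), Set.indicator_of_mem (Set.mem_Ioi.mpr h)]
  · rw [Set.indicator_of_notMem (fun hc => h (Umem.mp hc).2),
      Set.indicator_of_notMem (fun hc => h (Set.mem_Ioi.mp hc))]

lemma slice_right0 (f : ℝ → ℝ) (s : ℂ) {x : ℝ} (hx : ¬ 1 < x) (X : ℝ) :
    Uset.indicator (Kfn f s) (x, X) = 0 :=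
  Set.indicator_of_notMem (fun hc => hx (Umem.mp hc).1) _

lemma slice_left (f : ℝ → ℝ) (s : ℂ) (X : ℝ) :
    (fun x => Uset.indicator (Kfn f s) (x, X))
      = (Set.Ioo 1 X).indicator (fun x => Kfn f s (x, X)) := by
  ext x
  by_cases h : 1 < x ∧ x < X
  · rw [Set.indicator_of_mem (Umem.mpr h), Set.indicator_of_mem (Set.mem_Ioo.mpr h)]
  · rw [Set.indicator_of_notMem (fun hc => h (Umem.mp hc)),
      Set.indicator_of_notMem (fun hc => h (Set.mem_Ioo.mp hc))]

lemma gInt (f : ℝ → ℝ) (hf : ∀ x, 0 ≤ f x) (hcont : ContinuousOn f (Set.Ici (1:ℝ))) (s : ℂ)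
    (habs : IntegrableOn (fun x : ℝ => f x * x ^ (-s.re)) (Set.Ici (1:ℝ))) :
    IntegrableOn (fun x : ℝ => (f x : ℂ) * (x:ℂ) ^ (-s)) (Set.Ioi (1:ℝ)) := by
  have hm : AEStronglyMeasurable (fun x : ℝ => (f x : ℂ) * (x:ℂ) ^ (-s))
      (volume.restrict (Set.Ioi 1)) := by
    refine (ContinuousOn.aestronglyMeasurable ?_ measurableSet_Ioi)
    exact (Complex.continuous_ofReal.comp_continuousOn
      (hcont.mono Set.Ioi_subset_Ici_self)).mul
      ((contOn_cpow s).mono fun x hx => Set.mem_Ioi.mpr (lt_trans zero_lt_one (Set.mem_Ioi.mp hx)))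
  refine Integrable.mono' (habs.mono_set Set.Ioi_subset_Ici_self) hm ?_
  refine (ae_restrict_iff' measurableSet_Ioi).mpr (Filter.Eventually.of_forall fun x hx => ?_)
  have hx0 : (0:ℝ) < x := lt_trans zero_lt_one hx
  rw [norm_mul, Complex.norm_real, norm_cpow_neg s hx0, Real.norm_eq_abs, _root_.abs_of_nonneg (hf x)]

lemma KsliceInt (f : ℝ → ℝ) (hf : ∀ x, 0 ≤ f x) (hcont : ContinuousOn f (Set.Ici (1:ℝ))) (s : ℂ)
    (habs : IntegrableOn (fun x : ℝ => f x * x ^ (-s.re)) (Set.Ici (1:ℝ)))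
    {x : ℝ} (hx : 1 < x) :
    IntegrableOn (fun X => Kfn f s (x, X)) (Set.Ioi x) := by
  have hx0 : (0:ℝ) < x := lt_trans zero_lt_one hx
  have base := (gInt f hf hcont s habs).const_mul ((x:ℂ) ^ (-s) * ((f x / x : ℝ) : ℂ))
  have h1 : IntegrableOn (fun y => Kfn f s (x, x * y)) (Set.Ioi 1) := by
    refine IntegrableOn.congr_fun base (fun y hy => ?_) measurableSet_Ioi
    have hy0 : (0:ℝ) < y := lt_trans zero_lt_one hy
    simp only [Kfn]
    rw [mul_div_cancel_left₀ _ hx0.ne', Complex.ofReal_mul,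
      Complex.mul_cpow_ofReal_nonneg hx0.le hy0.le]
    push_cast
    ring
  have := (integrableOn_Ioi_comp_mul_left_iff (fun X => Kfn f s (x, X)) 1 hx0).mp h1
  simpa using this

lemma Knorm (f : ℝ → ℝ) (hf : ∀ x, 0 ≤ f x) (s : ℂ) {x : ℝ} (hx : 1 < x) :
    (∫ X, ‖Uset.indicator (Kfn f s) (x, X)‖)
      = (∫ X in Set.Ioi (1:ℝ), f X * X ^ (-s.re)) * (f x * x ^ (-s.re)) := by
  have hx0 : (0:ℝ) < x := lt_trans zero_lt_one hx
  have step1 : (fun X => ‖Uset.indicator (Kfn f s) (x, X)‖)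
      = (Set.Ioi x).indicator (fun X => (f x * f (X/x) / x) * X ^ (-s.re)) := by
    funext X
    by_cases h : x < X
    · rw [congrFun (slice_right f s hx) X, Set.indicator_of_mem (Set.mem_Ioi.mpr h),
        Set.indicator_of_mem (Set.mem_Ioi.mpr h)]
      have hX0 : (0:ℝ) < X := lt_trans hx0 h
      simp only [Kfn]
      rw [norm_mul, Complex.norm_real, norm_cpow_neg s hX0, Real.norm_eq_abs,
        _root_.abs_of_nonneg (div_nonneg (mul_nonneg (hf x) (hf _)) hx0.le)]
    · rw [congrFun (slice_right f s hx) X,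
        Set.indicator_of_notMem (show X ∉ Set.Ioi x from h),
        Set.indicator_of_notMem (show X ∉ Set.Ioi x from h), norm_zero]
  rw [step1, integral_indicator measurableSet_Ioi]
  have step3 : ∫ X in Set.Ioi x, (f x * f (X/x) / x) * X ^ (-s.re)
      = (f x / x) * ∫ X in Set.Ioi x, f (X/x) * X ^ (-s.re) := by
    rw [← integral_const_mul]
    refine setIntegral_congr_fun measurableSet_Ioi fun X _ => ?_
    ring
  have hcv := integral_comp_mul_left_Ioi (fun X => f (X/x) * X ^ (-s.re)) 1 hx0
  have lhs_eq : ∫ y in Set.Ioi (1:ℝ), f (x*y/x) * (x*y) ^ (-s.re)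
      = x ^ (-s.re) * ∫ X in Set.Ioi (1:ℝ), f X * X ^ (-s.re) := by
    rw [← integral_const_mul]
    refine setIntegral_congr_fun measurableSet_Ioi fun y hy => ?_
    have hy0 : (0:ℝ) < y := lt_trans zero_lt_one hy
    rw [mul_div_cancel_left₀ _ hx0.ne', Real.mul_rpow hx0.le hy0.le]
    ring
  simp only [mul_one] at hcv
  rw [lhs_eq] at hcv
  rw [step3, show ∫ X in Set.Ioi x, f (X/x) * X ^ (-s.re)
      = x * (x ^ (-s.re) * ∫ X in Set.Ioi (1:ℝ), f X * X ^ (-s.re)) by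
    rw [hcv, smul_eq_mul]; field_simp]
  field_simp

lemma KInt (f : ℝ → ℝ) (hf : ∀ x, 0 ≤ f x) (hcont : ContinuousOn f (Set.Ici (1:ℝ))) (s : ℂ)
    (habs : IntegrableOn (fun x : ℝ => f x * x ^ (-s.re)) (Set.Ici (1:ℝ))) :
    Integrable (Uset.indicator (Kfn f s)) (volume.prod volume) := by
  refine (integrable_prod_iff ?_).mpr ⟨?_, ?_⟩
  · rw [← MeasureTheory.Measure.volume_eq_prod]
    exact (aestronglyMeasurable_indicator_iff Uopen.measurableSet).mpr
      ((Kcont f hcont s).aestronglyMeasurable Uopen.measurableSet)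
  · refine Filter.Eventually.of_forall fun x => ?_
    by_cases hx : 1 < x
    · rw [slice_right f s hx, integrable_indicator_iff measurableSet_Ioi]
      exact KsliceInt f hf hcont s habs hx
    · have h0 : (fun X => Uset.indicator (Kfn f s) (x, X)) = 0 :=
        funext (slice_right0 f s hx)
      rw [h0]
      exact integrable_zero _ _ _
  · have heq : (fun x => ∫ X, ‖Uset.indicator (Kfn f s) (x, X)‖)
        = (Set.Ioi (1:ℝ)).indicator
          (fun x => (∫ X in Set.Ioi (1:ℝ), f X * X ^ (-s.re)) * (f x * x ^ (-s.re))) := by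
      funext x
      by_cases hx : 1 < x
      · rw [Set.indicator_of_mem (Set.mem_Ioi.mpr hx)]
        exact Knorm f hf s hx
      · rw [Set.indicator_of_notMem (show x ∉ Set.Ioi 1 from hx)]
        simp only [slice_right0 f s hx, norm_zero, integral_zero]
    rw [heq, integrable_indicator_iff measurableSet_Ioi]
    exact (habs.mono_set Set.Ioi_subset_Ici_self).const_mul _

lemma inner_right (f : ℝ → ℝ) (s : ℂ) {x : ℝ} (hx : 1 < x) :
    ((f x:ℂ) * (x:ℂ)^(-s)) * (∫ y in Set.Ioi (1:ℝ), (f y:ℂ) * (y:ℂ)^(-s))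
      = ∫ X, Uset.indicator (Kfn f s) (x, X) := by
  have hx0 : (0:ℝ) < x := lt_trans zero_lt_one hx
  have hcv := integral_comp_mul_left_Ioi (fun X => Kfn f s (x, X)) 1 hx0
  simp only [mul_one] at hcv
  have lhs_eq : ∫ y in Set.Ioi (1:ℝ), Kfn f s (x, x * y)
      = x⁻¹ • (((f x:ℂ) * (x:ℂ)^(-s)) * ∫ y in Set.Ioi (1:ℝ), (f y:ℂ) * (y:ℂ)^(-s)) := by
    have e1 : ∫ y in Set.Ioi (1:ℝ), Kfn f s (x, x * y)
        = ∫ y in Set.Ioi (1:ℝ),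
            x⁻¹ • (((f x:ℂ) * (x:ℂ)^(-s)) * ((f y:ℂ) * (y:ℂ)^(-s))) := by
      refine setIntegral_congr_fun measurableSet_Ioi fun y hy => ?_
      have hy0 : (0:ℝ) < y := lt_trans zero_lt_one hy
      simp only [Kfn]
      rw [mul_div_cancel_left₀ _ hx0.ne', Complex.ofReal_mul,
        Complex.mul_cpow_ofReal_nonneg hx0.le hy0.le, Complex.real_smul]
      push_cast
      field_simp
    rw [e1, integral_smul, integral_const_mul]
  rw [slice_right f s hx, integral_indicator measurableSet_Ioi]
  rw [lhs_eq] at hcv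
  have := congrArg (fun z => (x:ℝ) • z) hcv
  simp only [smul_smul, mul_inv_cancel₀ hx0.ne', one_smul] at this
  exact this

lemma inner_left (f : ℝ → ℝ) (s : ℂ) (X : ℝ) :
    ∫ x, Uset.indicator (Kfn f s) (x, X)
      = (Set.Ioi (1:ℝ)).indicator
          (fun X => (X:ℂ)^(-s) * ((∫ u in (1:ℝ)..X, f u * f (X/u) / u : ℝ) : ℂ)) X := by
  by_cases hX : 1 < X
  · rw [Set.indicator_of_mem (Set.mem_Ioi.mpr hX)]
    rw [slice_left f s X, integral_indicator measurableSet_Ioo]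
    simp only [Kfn]
    rw [integral_mul_const, intervalIntegral.integral_of_le hX.le,
      integral_Ioc_eq_integral_Ioo, mul_comm]
    congr 1
    exact integral_ofReal (𝕜 := ℂ) (f := fun u => f u * f (X/u) / u)
      (μ := volume.restrict (Set.Ioo 1 X))
  · rw [Set.indicator_of_notMem (show X ∉ Set.Ioi 1 from hX)]
    have h0 : (fun x => Uset.indicator (Kfn f s) (x, X)) = 0 :=
      funext fun x => Set.indicator_of_notMem
        (fun hc => hX (lt_trans (Umem.mp hc).1 (Umem.mp hc).2)) _
    rw [h0]
    exact integral_zero _ _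

/-- Theorem 4 (general form): for continuous nonnegative `f` on `[1,∞)` with
`∫₁^∞ f(x) x^{-Re s} dx < ∞`, one has
`(∫₁^∞ f(x) x^{-s} dx)² = 2 ∫₁^∞ x^{-s} (∫_{√x}^x f(u) f(x/u) du/u) dx`,
both sides being absolutely convergent. -/
theorem mellin_sq_identity (f : ℝ → ℝ) (hf : ∀ x, 0 ≤ f x)
    (hcont : ContinuousOn f (Set.Ici (1:ℝ))) (s : ℂ)
    (habs : IntegrableOn (fun x : ℝ => f x * x ^ (-s.re)) (Set.Ici (1:ℝ))) :
    IntegrableOn (fun x : ℝ =>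
      (x:ℂ) ^ (-s) * ((∫ u in Real.sqrt x..x, f u * f (x/u) / u : ℝ) : ℂ))
      (Set.Ici (1:ℝ)) ∧
    (∫ x in Set.Ici (1:ℝ), (f x : ℂ) * (x:ℂ) ^ (-s)) ^ 2
      = 2 * ∫ x in Set.Ici (1:ℝ),
          (x:ℂ) ^ (-s) * ((∫ u in Real.sqrt x..x, f u * f (x/u) / u : ℝ) : ℂ) := by
  have hKint : Integrable (Uset.indicator (Kfn f s)) (volume.prod volume) :=
    KInt f hf hcont s habs
  have hKint' : Integrable
      (Function.uncurry fun x X => Uset.indicator (Kfn f s) (x, X)) (volume.prod volume) :=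
    hKint
  have hswap := integral_integral_swap hKint'
  set FF : ℝ → ℂ :=
    fun X => (X:ℂ)^(-s) * ((∫ u in (1:ℝ)..X, f u * f (X/u) / u : ℝ) : ℂ) with hFFdef
  set G : ℝ → ℂ :=
    fun X => (X:ℂ)^(-s) * ((∫ u in Real.sqrt X..X, f u * f (X/u) / u : ℝ) : ℂ) with hGdef
  have hFFeq : (fun X => ∫ x, Uset.indicator (Kfn f s) (x, X)) = (Set.Ioi 1).indicator FF :=
    funext (inner_left f s)
  have sq_eq : (∫ x in Set.Ioi (1:ℝ), (f x:ℂ) * (x:ℂ)^(-s)) ^ 2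
      = ∫ X, ∫ x, Uset.indicator (Kfn f s) (x, X) := by
    rw [sq, ← integral_mul_const]
    rw [setIntegral_congr_fun measurableSet_Ioi
      (fun x hx => inner_right f s (Set.mem_Ioi.mp hx))]
    rw [setIntegral_eq_integral_of_forall_compl_eq_zero (fun x hx => ?_)]
    · exact hswap
    · have h0 : (fun X => Uset.indicator (Kfn f s) (x, X)) = 0 :=
        funext (slice_right0 f s (fun h => hx (Set.mem_Ioi.mpr h)))
      rw [h0]
      exact integral_zero _ _
  have hFG : ∀ X ∈ Set.Ioi (1:ℝ), FF X = 2 * G X := by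
    intro X hX
    rw [hFFdef, hGdef]
    simp only
    rw [symm_half f hcont (le_of_lt (Set.mem_Ioi.mp hX))]
    push_cast
    ring
  have hFInt : Integrable ((Set.Ioi (1:ℝ)).indicator FF) volume := by
    rw [← hFFeq]
    exact hKint'.integral_prod_right
  have hFF_On : IntegrableOn FF (Set.Ioi 1) :=
    (integrable_indicator_iff measurableSet_Ioi).mp hFInt
  have hGInt : IntegrableOn G (Set.Ioi 1) := by
    refine IntegrableOn.congr_fun (hFF_On.const_mul ((2:ℂ)⁻¹)) (fun X hX => ?_) measurableSet_Ioi
    rw [hFG X hX]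
    ring
  constructor
  · rw [IntegrableOn, Measure.restrict_congr_set Ioi_ae_eq_Ici.symm]
    exact hGInt
  · rw [integral_Ici_eq_integral_Ioi, sq_eq, hFFeq, integral_indicator measurableSet_Ioi,
      setIntegral_congr_fun measurableSet_Ioi hFG, integral_const_mul,
      integral_Ici_eq_integral_Ioi]
end

section
/- Let 0 < a < b and let f be integrable on [a,b]. Then for any complex s, (∫_a^b f(x) x^{-s} dx)² = 2 ∫_{a²}^{b²} x^{-s} ( ∫_{√x}^{min(x/a, b)} f(u) f(x/u) du/u ) dx. -/
open MeasureTheory Real Complex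

open Set


section helpers
lemma measurable_ofReal_cpow (c : ℂ) : Measurable fun t : ℝ => (t:ℂ) ^ c := by
  have h : (fun t : ℝ => (t:ℂ) ^ c)
      = fun t : ℝ => if (t:ℂ) = 0 then (if c = 0 then 1 else 0)
        else Complex.exp (Complex.log t * c) := by
    funext t; rw [Complex.cpow_def]
  rw [h]
  apply Measurable.ite _ measurable_const
  · exact (Complex.measurable_exp.comp ((Complex.measurable_log.comp
      Complex.measurable_ofReal).mul_const c))
  · rw [show {a : ℝ | (fun t : ℝ => (t:ℂ) = 0) a} = {(0:ℝ)} by ext t; simp]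
    exact measurableSet_singleton 0
lemma null_preimage_div {c : ℝ} (hc : 0 < c) {N : Set ℝ} (hN : volume N = 0) :
    volume {u : ℝ | 0 < u ∧ c / u ∈ N} = 0 := by
  have hsub : {u : ℝ | 0 < u ∧ c / u ∈ N} ⊆ (fun v : ℝ => c / v) '' (N ∩ Ioi 0) := by
    intro u hu
    obtain ⟨hu1, hu2⟩ := hu
    exact ⟨c / u, ⟨hu2, Set.mem_Ioi.2 (by positivity)⟩, by field_simp⟩
  refine measure_mono_null hsub ?_
  apply addHaar_image_eq_zero_of_differentiableOn_of_addHaar_eq_zero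
    (μ := (volume : Measure ℝ))
  · intro v hv
    have hv0 : v ≠ 0 := ne_of_gt hv.2
    exact ((differentiable_const c).differentiableAt.div differentiableAt_id hv0).differentiableWithinAt
  · exact measure_mono_null inter_subset_left hN

lemma image_div_Ioc {t α β : ℝ} (h0 : 0 < α) (hαβ : α ≤ β) (ht : 0 < t) :
    (fun u : ℝ => t / u) '' Ioc α β = Ico (t/β) (t/α) := by
  ext y
  constructor
  · rintro ⟨u, ⟨hu1, hu2⟩, rfl⟩
    have hu0 : 0 < u := lt_of_le_of_lt h0.le hu1
    constructor
    · exact div_le_div_of_nonneg_left ht.le hu0 hu2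
    · exact div_lt_div_of_pos_left ht h0 hu1
  · rintro ⟨h1, h2⟩
    have hβ : 0 < β := h0.trans_le hαβ
    have hy0 : 0 < y := lt_of_lt_of_le (by positivity) h1
    refine ⟨t / y, ⟨?_, ?_⟩, by field_simp⟩
    · rw [lt_div_iff₀ hy0]
      rw [lt_div_iff₀ h0] at h2
      linarith [h2]
    · rw [div_le_iff₀ hy0]
      rw [div_le_iff₀ hβ] at h1
      linarith [h1]

lemma integral_reflect (g : ℝ → ℂ) {t α β : ℝ} (h0 : 0 < α) (hαβ : α ≤ β) (ht : 0 < t) :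
    ∫ y in Ico (t/β) (t/α), g y = ∫ u in Ioc α β, (t/u^2) * g (t/u) := by
  rw [← image_div_Ioc h0 hαβ ht]
  have hderiv : ∀ u ∈ Ioc α β, HasDerivWithinAt (fun u : ℝ => t / u)
      (-(t / u ^ 2)) (Ioc α β) u := by
    intro u hu
    have hu0 : u ≠ 0 := ne_of_gt (h0.trans_le hu.1.le)
    have := ((hasDerivAt_inv hu0).const_mul t).hasDerivWithinAt (s := Ioc α β)
    have e : (fun u : ℝ => t / u) = fun y => t * y⁻¹ := by funext y; ring
    rw [e, show -(t / u ^ 2) = t * -(u ^ 2)⁻¹ by ring]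
    exact this
  have hinj : InjOn (fun u : ℝ => t / u) (Ioc α β) := by
    intro x hx y hy hxy
    have hx0 : x ≠ 0 := ne_of_gt (h0.trans_le hx.1.le)
    have hy0 : y ≠ 0 := ne_of_gt (h0.trans_le hy.1.le)
    exact (mul_left_cancel₀ (ne_of_gt ht) ((div_eq_div_iff hx0 hy0).1 hxy)).symm
  rw [integral_image_eq_integral_abs_deriv_smul measurableSet_Ioc hderiv hinj g]
  refine setIntegral_congr_fun measurableSet_Ioc fun u hu => ?_
  have hu0 : 0 < u := h0.trans_le hu.1.le
  rw [abs_neg, _root_.abs_of_nonneg (show (0:ℝ) ≤ t / u ^ 2 by positivity), Complex.real_smul]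
  push_cast
  ring

end helpers

set_option maxHeartbeats 2000000 in
theorem key (a b : ℝ) (ha : 0 < a) (hab : a < b)
    (f : ℝ → ℝ) (hsm : StronglyMeasurable f) (hint : IntervalIntegrable f volume a b)
    (s : ℂ) :
    (∫ x in a..b, (f x : ℂ) * (x:ℂ) ^ (-s)) ^ 2
      = 2 * ∫ x in (a^2)..(b^2),
          (x:ℂ) ^ (-s) *
            ((∫ u in Real.sqrt x..(min (x/a) b), f u * f (x/u) / u : ℝ) : ℂ) := by
  have hb : 0 < b := ha.trans hab
  have ha2b2 : a^2 ≤ b^2 := by nlinarith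
  set Φ : ℝ → ℝ → ℂ := fun y t => ((f y * f (t/y) / y : ℝ) : ℂ) * (t:ℂ)^(-s) with hΦdef
  set S : Set (ℝ × ℝ) := {p | p.1 ∈ Ioc a b ∧ p.2 ∈ Ioc (a*p.1) (b*p.1)} with hSdef
  set FF : ℝ × ℝ → ℂ := S.indicator (fun p => Φ p.1 p.2) with hFFdef
  have hSmeas : MeasurableSet S := by
    have hSeq : S = (Prod.fst ⁻¹' Ioc a b) ∩ ({p : ℝ×ℝ | a * p.1 < p.2}
        ∩ {p : ℝ×ℝ | p.2 ≤ b * p.1}) := by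
      ext p; simp only [hSdef, Set.mem_setOf_eq, Set.mem_Ioc, Set.mem_inter_iff,
        Set.mem_preimage, and_assoc]
    rw [hSeq]
    exact (measurable_fst measurableSet_Ioc).inter
      ((measurableSet_lt (measurable_fst.const_mul a) measurable_snd).inter
        (measurableSet_le measurable_snd (measurable_fst.const_mul b)))
  have hΦmeas : StronglyMeasurable fun p : ℝ×ℝ => Φ p.1 p.2 := by
    apply Measurable.stronglyMeasurable
    exact (Complex.measurable_ofReal.comp
        (((hsm.measurable.comp measurable_fst).mul
          (hsm.measurable.comp (measurable_snd.div measurable_fst))).div measurable_fst)).mul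
      ((measurable_ofReal_cpow (-s)).comp measurable_snd)
  have hFFmeas : StronglyMeasurable FF := hΦmeas.indicator hSmeas
  -- slice description
  have hFFslice : ∀ y ∈ Set.Ioc a b, (fun t => FF (y, t)) = (Ioc (a*y) (b*y)).indicator (Φ y) := by
    intro y hy
    funext t
    by_cases ht : t ∈ Ioc (a*y) (b*y)
    · rw [hFFdef, Set.indicator_of_mem (show (y,t) ∈ S from ⟨hy, ht⟩),
        Set.indicator_of_mem ht]
    · rw [hFFdef, Set.indicator_of_notMem (show (y,t) ∉ S from fun hS => ht hS.2),
        Set.indicator_of_notMem ht]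
  have hFFslice0 : ∀ y, y ∉ Set.Ioc a b → (fun t => FF (y, t)) = fun _ => 0 := by
    intro y hy; funext t
    rw [hFFdef, Set.indicator_of_notMem (show (y,t) ∉ S from fun hS => hy hS.1)]
  -- interval integrability of slices
  have hslice : ∀ y ∈ Set.Ioc a b, IntervalIntegrable (Φ y) volume (a*y) (b*y) := by
    intro y hy
    have hy0 : 0 < y := ha.trans hy.1
    have hcastf : IntervalIntegrable (fun x => ((f x : ℝ) : ℂ)) volume a b := by
      rw [intervalIntegrable_iff] at hint ⊢
      exact hint.ofReal
    have hH : IntervalIntegrable (fun x => ((f x : ℝ):ℂ) * (((x*y:ℝ)):ℂ)^(-s)) volume a b := by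
      apply IntervalIntegrable.mul_continuousOn hcastf
      intro x hx
      have hx0 : x ≠ 0 := by
        rw [Set.uIcc_of_le hab.le] at hx
        exact ne_of_gt (lt_of_lt_of_le ha hx.1)
      have hxy : x * y ≠ 0 := mul_ne_zero hx0 (ne_of_gt hy0)
      have hc1 : ContinuousAt (fun x : ℝ => x * y) x := continuousAt_id.mul continuousAt_const
      have hc2 : ContinuousAt ((fun z : ℝ => (z:ℂ)^(-s)) ∘ (fun x : ℝ => x * y)) x :=
        ContinuousAt.comp (x := x) (g := fun z : ℝ => (z:ℂ)^(-s)) (f := fun x : ℝ => x * y)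
          (continuousAt_ofReal_cpow_const (x*y) (-s) (Or.inr hxy)) hc1
      exact hc2.continuousWithinAt
    have hh : IntervalIntegrable (fun t => ((f (t/y) : ℝ):ℂ) * ((t:ℝ):ℂ)^(-s))
        volume (a*y) (b*y) := by
      have h1 := hH.comp_mul_right (c := y⁻¹)
      have h2 : (fun t => ((f (t/y) : ℝ):ℂ) * ((t:ℝ):ℂ)^(-s))
          = fun t => ((f (t * y⁻¹) : ℝ):ℂ) * (((t * y⁻¹ * y :ℝ)):ℂ)^(-s) := by
        funext t
        rw [div_eq_mul_inv]
        congr 2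
        field_simp
      rw [h2]
      have hb1 : a / y⁻¹ = a * y := by field_simp
      have hb2 : b / y⁻¹ = b * y := by field_simp
      rwa [hb1, hb2] at h1
    have h3 : Φ y = fun t => ((f y / y : ℝ):ℂ) * (((f (t/y) : ℝ):ℂ) * ((t:ℝ):ℂ)^(-s)) := by
      funext t
      simp only [hΦdef]
      push_cast
      ring
    rw [h3]
    exact hh.const_mul _
  -- constants for domination
  set M : ℝ := max ((a^2) ^ (-s.re)) ((b^2) ^ (-s.re)) with hMdef
  have hM0 : 0 ≤ M := le_trans (Real.rpow_nonneg (by positivity) _) (le_max_left _ _)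
  have hMbound : ∀ t : ℝ, t ∈ Set.Ioc (a^2) (b^2) → ‖(t:ℂ)^(-s)‖ ≤ M := by
    intro t ht
    have ht0 : 0 < t := lt_of_le_of_lt (by positivity) ht.1
    rw [Complex.norm_cpow_eq_rpow_re_of_pos ht0]
    rcases le_or_gt 0 (-s).re with he | he
    · exact le_trans (Real.rpow_le_rpow ht0.le ht.2 he) (le_max_right _ _)
    · exact le_trans (Real.rpow_le_rpow_of_nonpos (by positivity) ht.1.le he.le)
        (le_max_left _ _)
  have hsubIoc : ∀ y ∈ Set.Ioc a b, Set.Ioc (a*y) (b*y) ⊆ Set.Ioc (a^2) (b^2) := by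
    intro y hy t ht
    constructor
    · nlinarith [ht.1, hy.1]
    · nlinarith [ht.2, hy.2, ha.trans hy.1]
  set K : ℝ := ∫ x in Set.Ioc a b, |f x| with hKdef
  have hK0 : 0 ≤ K := setIntegral_nonneg measurableSet_Ioc (fun x _ => abs_nonneg _)
  have habsint : IntegrableOn (fun x => |f x|) (Set.Ioc a b) volume := hint.1.norm
  -- the norm integral bound
  have hnormbd : ∀ y ∈ Set.Ioc a b, (∫ t, ‖FF (y, t)‖) ≤ M * K * |f y| := by
    intro y hy
    have hy0 : 0 < y := ha.trans hy.1
    have hslint : IntegrableOn (Φ y) (Set.Ioc (a*y) (b*y)) volume := by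
      have := hslice y hy
      rwa [intervalIntegrable_iff_integrableOn_Ioc_of_le
        (by nlinarith [hy.1] : a*y ≤ b*y)] at this
    have hcomp : IntegrableOn (fun t => |f (t/y)|) (Set.Ioc (a*y) (b*y)) volume := by
      have h1 := (hint.norm).comp_mul_right (c := y⁻¹)
      have hb1 : a / y⁻¹ = a * y := by field_simp
      have hb2 : b / y⁻¹ = b * y := by field_simp
      rw [hb1, hb2] at h1
      have h2 : (fun t => |f (t/y)|) = fun t => |f (t * y⁻¹)| := by
        funext t; rw [div_eq_mul_inv]
      rw [h2]
      rwa [intervalIntegrable_iff_integrableOn_Ioc_of_le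
        (by nlinarith [hy.1] : a*y ≤ b*y)] at h1
    have hff : (fun t => ‖FF (y, t)‖) = (Set.Ioc (a*y) (b*y)).indicator
        (fun t => ‖Φ y t‖) := by
      funext t
      rw [congrFun (hFFslice y hy) t, norm_indicator_eq_indicator_norm]
    have hayby : a * y ≤ b * y := by nlinarith [hy.1]
    have hcompint : ∫ t in Set.Ioc (a*y) (b*y), |f (t/y)| = y * K := by
      rw [← intervalIntegral.integral_of_le hayby,
        intervalIntegral.integral_comp_div (fun x => |f x|) (ne_of_gt hy0)]
      rw [mul_div_cancel_right₀ a (ne_of_gt hy0), mul_div_cancel_right₀ b (ne_of_gt hy0),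
        intervalIntegral.integral_of_le hab.le]
      rw [smul_eq_mul, hKdef]
    rw [hff, MeasureTheory.integral_indicator measurableSet_Ioc]
    calc ∫ t in Set.Ioc (a*y) (b*y), ‖Φ y t‖
        ≤ ∫ t in Set.Ioc (a*y) (b*y), (|f y| / y * M) * |f (t/y)| := by
          apply setIntegral_mono_on hslint.norm (hcomp.const_mul _) measurableSet_Ioc
          intro t ht
          have hMt : ‖(t:ℂ)^(-s)‖ ≤ M := hMbound t (hsubIoc y hy ht)
          have : ‖Φ y t‖ = (|f y| * |f (t/y)| / y) * ‖(t:ℂ)^(-s)‖ := by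
            rw [hΦdef]
            simp only [norm_mul, Complex.norm_real, Real.norm_eq_abs]
            rw [abs_div, abs_mul, abs_of_pos hy0]
          rw [this]
          have h2 : 0 ≤ |f y| * |f (t/y)| / y := by positivity
          calc (|f y| * |f (t/y)| / y) * ‖(t:ℂ)^(-s)‖
              ≤ (|f y| * |f (t/y)| / y) * M := mul_le_mul_of_nonneg_left hMt h2
            _ = (|f y| / y * M) * |f (t/y)| := by ring
      _ = (|f y| / y * M) * ∫ t in Set.Ioc (a*y) (b*y), |f (t/y)| := by
          rw [MeasureTheory.integral_const_mul]
      _ = (|f y| / y * M) * (y * K) := by rw [hcompint]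
      _ = M * K * |f y| := by field_simp
  have hFFprodint : Integrable FF (volume.prod volume) := by
    rw [integrable_prod_iff hFFmeas.aestronglyMeasurable]
    constructor
    · refine Filter.Eventually.of_forall fun y => ?_
      by_cases hy : y ∈ Set.Ioc a b
      · have : (fun t => FF (y, t)) = (Set.Ioc (a*y) (b*y)).indicator (Φ y) := hFFslice y hy
        rw [this, integrable_indicator_iff measurableSet_Ioc]
        have h := hslice y hy
        rwa [intervalIntegrable_iff_integrableOn_Ioc_of_le
          (by nlinarith [hy.1] : a*y ≤ b*y)] at h
      · rw [hFFslice0 y hy]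
        exact integrable_zero _ _ _
    · apply Integrable.mono' (g := (Set.Ioc a b).indicator (fun y => M * K * |f y|))
      · exact (integrable_indicator_iff measurableSet_Ioc).2 (habsint.const_mul (M*K))
      · exact (hFFmeas.norm.integral_prod_right').aestronglyMeasurable
      · refine Filter.Eventually.of_forall fun y => ?_
        by_cases hy : y ∈ Set.Ioc a b
        · rw [Set.indicator_of_mem hy, Real.norm_eq_abs,
            _root_.abs_of_nonneg (integral_nonneg (fun t => norm_nonneg _))]
          exact hnormbd y hy
        · rw [Set.indicator_of_notMem hy]
          have h0 : ∀ t, FF (y, t) = 0 := fun t => congrFun (hFFslice0 y hy) t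
          simp [h0]
  have hswap : (∫ y, ∫ t, FF (y, t)) = ∫ t, ∫ y, FF (y, t) :=
    MeasureTheory.integral_integral_swap (f := fun y t => FF (y, t)) hFFprodint
  have hleft : (∫ x in a..b, (f x : ℂ) * (x:ℂ) ^ (-s)) ^ 2
      = ∫ y, ∫ t, FF (y, t) := by
    have e1 : (∫ x in a..b, (f x : ℂ) * (x:ℂ) ^ (-s)) ^ 2
        = ∫ y in a..b, ((f y : ℂ) * (y:ℂ)^(-s)) * ∫ x in a..b, (f x : ℂ) * (x:ℂ)^(-s) := by
      rw [intervalIntegral.integral_mul_const]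
      ring
    rw [e1]
    have e2 : Set.EqOn (fun y => ((f y:ℂ) * (y:ℂ)^(-s)) * (∫ x in a..b, (f x : ℂ) * (x:ℂ)^(-s)))
        (fun y => ∫ t in (a*y)..(b*y), Φ y t) (Set.uIcc a b) := by
      intro y hy
      rw [Set.uIcc_of_le hab.le] at hy
      have hy0 : 0 < y := lt_of_lt_of_le ha hy.1
      simp only
      have eA : ((f y:ℂ) * (y:ℂ)^(-s)) * (∫ x in a..b, (f x:ℂ) * (x:ℂ)^(-s))
          = ∫ x in a..b, ((f y * f x : ℝ):ℂ) * (((x*y:ℝ)):ℂ)^(-s) := by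
        rw [← intervalIntegral.integral_const_mul]
        apply intervalIntegral.integral_congr
        intro x hx
        rw [Set.uIcc_of_le hab.le] at hx
        have hx0 : (0:ℝ) ≤ x := le_trans ha.le hx.1
        simp only
        push_cast
        rw [Complex.mul_cpow_ofReal_nonneg hx0 hy0.le]
        ring
      rw [eA]
      have eB : (fun x : ℝ => ((f y * f x : ℝ):ℂ) * (((x*y:ℝ)):ℂ)^(-s))
          = fun x : ℝ => ((f y * f ((x*y)/y) : ℝ):ℂ) * (((x*y:ℝ)):ℂ)^(-s) := by
        funext x
        rw [mul_div_cancel_right₀ x (ne_of_gt hy0)]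
      rw [eB]
      rw [intervalIntegral.integral_comp_mul_right
        (fun t => ((f y * f (t/y) : ℝ):ℂ) * ((t:ℝ):ℂ)^(-s)) (ne_of_gt hy0)]
      rw [← intervalIntegral.integral_smul]
      apply intervalIntegral.integral_congr
      intro t ht
      rw [hΦdef]
      simp only
      rw [Complex.real_smul]
      push_cast
      ring
    rw [intervalIntegral.integral_congr e2]
    rw [intervalIntegral.integral_of_le hab.le]
    have e3 : Set.EqOn (fun y => ∫ t in (a*y)..(b*y), Φ y t)
        (fun y => ∫ t, FF (y, t)) (Set.Ioc a b) := by
      intro y hy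
      have hy0 : 0 < y := ha.trans hy.1
      simp only
      rw [intervalIntegral.integral_of_le (by nlinarith [hy.1] : a*y ≤ b*y),
        ← MeasureTheory.integral_indicator measurableSet_Ioc, ← hFFslice y hy]
    rw [setIntegral_congr_fun measurableSet_Ioc e3]
    have e4 : (Set.Ioc a b).indicator (fun y => ∫ t, FF (y, t)) = fun y => ∫ t, FF (y, t) := by
      funext y
      by_cases hy : y ∈ Set.Ioc a b
      · rw [Set.indicator_of_mem hy]
      · rw [Set.indicator_of_notMem hy]
        have h0 : ∀ t, FF (y, t) = 0 := fun t => congrFun (hFFslice0 y hy) t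
        simp [h0]
    rw [← MeasureTheory.integral_indicator measurableSet_Ioc, e4]
  rw [hleft, hswap]
  have hAdef : ∀ t : ℝ, (fun y => FF (y, t))
      = ({y : ℝ | y ∈ Set.Ioc a b ∧ t ∈ Set.Ioc (a*y) (b*y)}).indicator (fun y => Φ y t) := by
    intro t; funext y
    by_cases hyt : y ∈ Set.Ioc a b ∧ t ∈ Set.Ioc (a*y) (b*y)
    · rw [hFFdef, Set.indicator_of_mem (show (y,t) ∈ S from hyt),
        Set.indicator_of_mem (show y ∈ {y : ℝ | y ∈ Set.Ioc a b ∧ t ∈ Set.Ioc (a*y) (b*y)}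
          from hyt)]
    · rw [hFFdef, Set.indicator_of_notMem (show (y,t) ∉ S from hyt),
        Set.indicator_of_notMem (show y ∉ {y : ℝ | y ∈ Set.Ioc a b ∧ t ∈ Set.Ioc (a*y) (b*y)}
          from hyt)]
  have hAmeas : ∀ t : ℝ, MeasurableSet {y : ℝ | y ∈ Set.Ioc a b ∧ t ∈ Set.Ioc (a*y) (b*y)} := by
    intro t
    have he : {y : ℝ | y ∈ Set.Ioc a b ∧ t ∈ Set.Ioc (a*y) (b*y)}
        = Set.Ioc a b ∩ ({y : ℝ | a * y < t} ∩ {y : ℝ | t ≤ b * y}) := by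
      ext y
      simp only [Set.mem_setOf_eq, Set.mem_Ioc, Set.mem_inter_iff, and_assoc]
    rw [he]
    exact measurableSet_Ioc.inter
      ((measurableSet_lt (measurable_id.const_mul a) measurable_const).inter
        (measurableSet_le measurable_const (measurable_id.const_mul b)))
  have hJ0 : ∀ t : ℝ, t ∉ Set.Ioc (a^2) (b^2) → (∫ y, FF (y, t)) = 0 := by
    intro t ht
    have hempty : {y : ℝ | y ∈ Set.Ioc a b ∧ t ∈ Set.Ioc (a*y) (b*y)} = ∅ := by
      ext y
      simp only [Set.mem_setOf_eq, Set.mem_Ioc, Set.mem_empty_iff_false, iff_false]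
      rintro ⟨⟨h1, h2⟩, ⟨h3, h4⟩⟩
      exact ht ⟨by nlinarith, by nlinarith⟩
    rw [hAdef t, hempty]
    simp
  have hout : (∫ t, ∫ y, FF (y, t)) = ∫ t in Set.Ioc (a^2) (b^2), ∫ y, FF (y, t) := by
    rw [← MeasureTheory.integral_indicator measurableSet_Ioc]
    congr 1
    funext t
    by_cases ht : t ∈ Set.Ioc (a^2) (b^2)
    · rw [Set.indicator_of_mem ht]
    · rw [Set.indicator_of_notMem ht, hJ0 t ht]
  rw [hout]
  have hae : ∀ᵐ t ∂(volume.restrict (Set.Ioc (a^2) (b^2))),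
      (∫ y, FF (y, t)) = 2 * ((t:ℂ)^(-s) *
        ((∫ u in Real.sqrt t..(min (t/a) b), f u * f (t/u) / u : ℝ) : ℂ)) := by
    have hslicet : ∀ᵐ t ∂(volume : Measure ℝ), Integrable (fun y => FF (y, t)) volume :=
      hFFprodint.prod_left_ae
    filter_upwards [ae_restrict_of_ae hslicet, ae_restrict_mem measurableSet_Ioc] with t hI ht
    have ht0 : 0 < t := lt_of_le_of_lt (by positivity) ht.1
    set r := Real.sqrt t with hrdef
    set m := min (t/a) b with hmdef
    have hr0 : 0 < r := Real.sqrt_pos.2 ht0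
    have hr2 : r^2 = t := Real.sq_sqrt ht0.le
    have har : a ≤ r := by
      have h := Real.sqrt_le_sqrt ht.1.le
      rwa [Real.sqrt_sq ha.le] at h
    have hrb : r ≤ b := by
      have h := Real.sqrt_le_sqrt ht.2
      rwa [Real.sqrt_sq hb.le] at h
    have hrm : r ≤ m := by
      apply le_min _ hrb
      rw [le_div_iff₀ ha]
      nlinarith
    set M1 := max a (t/b) with hM1def
    have hM1r : M1 ≤ r := by
      apply max_le har
      rw [div_le_iff₀ hb]
      nlinarith
    have hM10 : 0 < M1 := lt_of_lt_of_le ha (le_max_left _ _)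
    have hmb : m ≤ b := min_le_right _ _
    have hmta : m ≤ t/a := min_le_left _ _
    set A := {y : ℝ | y ∈ Set.Ioc a b ∧ t ∈ Set.Ioc (a*y) (b*y)} with hA2
    have hAae : A =ᵐ[volume] Set.Ioc M1 m := by
      rw [MeasureTheory.ae_eq_set]
      constructor
      · refine measure_mono_null ?_ (measure_singleton (t/b))
        intro y hy
        obtain ⟨⟨⟨h1, h2⟩, ⟨h3, h4⟩⟩, h5⟩ := hy
        simp only [Set.mem_Ioc, not_and_or, not_lt, not_le] at h5
        rcases h5 with h5 | h5
        · rcases le_max_iff.mp h5 with h6 | h6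
          · linarith
          · have h7 : t/b ≤ y := by rw [div_le_iff₀ hb]; linarith
            simp only [Set.mem_singleton_iff]
            linarith
        · rcases min_lt_iff.mp h5 with h6 | h6
          · rw [div_lt_iff₀ ha] at h6
            linarith
          · linarith
      · refine measure_mono_null ?_ (measure_singleton (t/a))
        intro y hy
        obtain ⟨⟨hy1, hy2⟩, hyA⟩ := hy
        have hay : a < y := lt_of_le_of_lt (le_max_left _ _) hy1
        have hyb : y ≤ b := le_trans hy2 hmb
        have htb : t ≤ b * y := by
          have : t/b < y := lt_of_le_of_lt (le_max_right _ _) hy1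
          rw [div_lt_iff₀ hb] at this
          linarith
        have hat : a * y ≤ t := by
          have : y ≤ t/a := le_trans hy2 hmta
          rw [le_div_iff₀ ha] at this
          linarith
        have h7 : ¬(a * y < t) := fun hlt => hyA ⟨⟨hay, hyb⟩, ⟨hlt, htb⟩⟩
        simp only [Set.mem_singleton_iff]
        rw [eq_div_iff (ne_of_gt ha)]
        linarith
    have hJt : (∫ y, FF (y, t)) = ∫ y in Set.Ioc M1 m, Φ y t := by
      rw [hAdef t, MeasureTheory.integral_indicator (hAmeas t)]
      exact setIntegral_congr_set hAae
    have hIntOn : IntegrableOn (fun y => Φ y t) (Set.Ioc M1 m) volume := by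
      have h := hI
      rw [hAdef t, integrable_indicator_iff (hAmeas t)] at h
      rw [IntegrableOn, ← Measure.restrict_congr_set hAae]
      exact h
    have hsplit : ∫ y in Set.Ioc M1 m, Φ y t
        = (∫ y in Set.Ioc M1 r, Φ y t) + ∫ y in Set.Ioc r m, Φ y t := by
      rw [← setIntegral_union (Set.Ioc_disjoint_Ioc_of_le le_rfl) measurableSet_Ioc
        (hIntOn.mono_set (Set.Ioc_subset_Ioc_right hrm))
        (hIntOn.mono_set (Set.Ioc_subset_Ioc_left hM1r)),
        Set.Ioc_union_Ioc_eq_Ioc hM1r hrm]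
    have htm : t / m = M1 := by
      rcases le_total (t/a) b with h | h
      · rw [hmdef, min_eq_left h, hM1def, max_eq_left (by
          rw [div_le_iff₀ hb]
          rw [div_le_iff₀ ha] at h
          linarith)]
        rw [div_div_eq_mul_div]
        field_simp
      · rw [hmdef, min_eq_right h, hM1def, max_eq_right (by
          rw [le_div_iff₀ hb]
          rw [le_div_iff₀ ha] at h
          linarith)]
    have htr : t / r = r := by
      rw [eq_comm, eq_div_iff (ne_of_gt hr0)]
      nlinarith
    have hrefl : ∫ y in Set.Ioc M1 r, Φ y t = ∫ u in Set.Ioc r m, Φ u t := by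
      have h1 : ∫ y in Set.Ioc M1 r, Φ y t = ∫ y in Set.Ico M1 r, Φ y t :=
        setIntegral_congr_set (MeasureTheory.Ioc_ae_eq_Icc.trans MeasureTheory.Ico_ae_eq_Icc.symm)
      have h2 : Set.Ico M1 r = Set.Ico (t/m) (t/r) := by rw [htm, htr]
      rw [h1, h2, integral_reflect (fun y => Φ y t) (lt_of_lt_of_le hr0 le_rfl) hrm ht0]
      apply setIntegral_congr_fun measurableSet_Ioc
      intro u hu
      have hu0 : 0 < u := lt_of_lt_of_le hr0 hu.1.le
      have htu : t / (t / u) = u := by field_simp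
      simp only [hΦdef, htu]
      have hut : (u:ℂ) ≠ 0 := Complex.ofReal_ne_zero.mpr (ne_of_gt hu0)
      have htt : (t:ℂ) ≠ 0 := Complex.ofReal_ne_zero.mpr (ne_of_gt ht0)
      push_cast
      field_simp
    have hfin : (∫ u in Set.Ioc r m, Φ u t)
        = (t:ℂ)^(-s) * ((∫ u in r..m, f u * f (t/u) / u : ℝ) : ℂ) := by
      rw [← intervalIntegral.integral_of_le hrm]
      simp only [hΦdef]
      rw [intervalIntegral.integral_mul_const, intervalIntegral.integral_ofReal]
      ring
    rw [hJt, hsplit, hrefl, hfin]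
    ring
  rw [MeasureTheory.integral_congr_ae hae, MeasureTheory.integral_const_mul,
    intervalIntegral.integral_of_le ha2b2]


set_option maxHeartbeats 1000000 in
/-- Finite-interval identity from the proof of Theorem 4: for `0 < a < b`, `f`
integrable on `[a,b]` and any complex `s`,
`(∫_a^b f(x) x^{-s} dx)² = 2 ∫_{a²}^{b²} x^{-s} (∫_{√x}^{min(x/a,b)} f(u) f(x/u) du/u) dx`. -/
theorem mellin_sq_identity_finite (a b : ℝ) (ha : 0 < a) (hab : a < b)
    (f : ℝ → ℝ) (hf : IntervalIntegrable f volume a b) (s : ℂ) :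
    (∫ x in a..b, (f x : ℂ) * (x:ℂ) ^ (-s)) ^ 2
      = 2 * ∫ x in (a^2)..(b^2),
          (x:ℂ) ^ (-s) *
            ((∫ u in Real.sqrt x..(min (x/a) b), f u * f (x/u) / u : ℝ) : ℂ) := by
  have hb : 0 < b := ha.trans hab
  have ha2b2 : a^2 ≤ b^2 := by nlinarith
  have hIoc : IntegrableOn f (Set.Ioc a b) volume := hf.1
  set f' : ℝ → ℝ := hIoc.aestronglyMeasurable.mk f with hf'def
  have hsm : StronglyMeasurable f' := hIoc.aestronglyMeasurable.stronglyMeasurable_mk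
  have hmk : f =ᵐ[volume.restrict (Set.Ioc a b)] f' := hIoc.aestronglyMeasurable.ae_eq_mk
  set N : Set ℝ := {x | ¬ f x = f' x} ∩ Set.Ioc a b with hNdef
  have hNnull : volume N = 0 := by
    have h := hmk
    rw [Filter.EventuallyEq, ae_iff, Measure.restrict_apply' measurableSet_Ioc] at h
    exact h
  have hae_global : ∀ᵐ x ∂(volume : Measure ℝ), x ∈ Set.Ioc a b → f x = f' x := by
    rw [ae_iff]
    apply measure_mono_null _ hNnull
    intro x hx
    simp only [Set.mem_setOf_eq, not_forall, Classical.not_imp] at hx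
    exact ⟨hx.2, hx.1⟩
  have hint' : IntervalIntegrable f' volume a b := by
    constructor
    · exact hIoc.congr hmk
    · rw [Set.Ioc_eq_empty (not_lt.mpr hab.le)]
      exact integrableOn_empty
  have hL : (∫ x in a..b, (f x:ℂ) * (x:ℂ)^(-s)) = ∫ x in a..b, (f' x:ℂ) * (x:ℂ)^(-s) := by
    apply intervalIntegral.integral_congr_ae
    filter_upwards [hae_global] with x hx hxmem
    rw [Set.uIoc_of_le hab.le] at hxmem
    rw [hx hxmem]
  have hR : (∫ x in (a^2)..(b^2), (x:ℂ)^(-s) *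
        ((∫ u in Real.sqrt x..(min (x/a) b), f u * f (x/u) / u : ℝ):ℂ))
      = ∫ x in (a^2)..(b^2), (x:ℂ)^(-s) *
        ((∫ u in Real.sqrt x..(min (x/a) b), f' u * f' (x/u) / u : ℝ):ℂ) := by
    apply intervalIntegral.integral_congr
    intro x hx
    rw [Set.uIcc_of_le ha2b2] at hx
    have hx0 : 0 < x := lt_of_lt_of_le (by positivity) hx.1
    have hrx : a ≤ Real.sqrt x := by
      have h := Real.sqrt_le_sqrt hx.1
      rwa [Real.sqrt_sq ha.le] at h
    have hxb : Real.sqrt x ≤ b := by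
      have h := Real.sqrt_le_sqrt hx.2
      rwa [Real.sqrt_sq hb.le] at h
    have hx2 : Real.sqrt x ^ 2 = x := Real.sq_sqrt hx0.le
    have hrm : Real.sqrt x ≤ min (x/a) b := by
      apply le_min _ hxb
      rw [le_div_iff₀ ha]
      nlinarith
    have hinner : (∫ u in Real.sqrt x..(min (x/a) b), f u * f (x/u) / u)
        = ∫ u in Real.sqrt x..(min (x/a) b), f' u * f' (x/u) / u := by
      apply intervalIntegral.integral_congr_ae
      have h1 : ∀ᵐ u ∂(volume : Measure ℝ), ¬(0 < u ∧ x/u ∈ N) := by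
        rw [ae_iff]
        have : {u : ℝ | ¬¬(0 < u ∧ x/u ∈ N)} = {u : ℝ | 0 < u ∧ x/u ∈ N} := by
          ext u; simp [not_not]
        rw [this]
        exact null_preimage_div hx0 hNnull
      have h2 : ∀ᵐ u ∂(volume : Measure ℝ), u ≠ x/a := by
        rw [ae_iff]
        have : {u : ℝ | ¬ u ≠ x/a} = {x/a} := by ext u; simp
        rw [this]
        exact measure_singleton _
      filter_upwards [hae_global, h1, h2] with u hu hN1 hN2 hmem
      rw [Set.uIoc_of_le hrm] at hmem
      have hu0 : 0 < u := lt_of_le_of_lt (le_trans ha.le hrx) hmem.1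
      have hua : a < u := lt_of_le_of_lt hrx hmem.1
      have hub : u ≤ b := le_trans hmem.2 (min_le_right _ _)
      have huxa : u < x/a := lt_of_le_of_ne (le_trans hmem.2 (min_le_left _ _)) hN2
      have hxua : a < x/u := by
        rw [lt_div_iff₀ hu0]
        rw [lt_div_iff₀ ha] at huxa
        linarith
      have hxub : x/u ≤ b := by
        have h3 : x/u < Real.sqrt x := by
          rw [div_lt_iff₀ hu0]
          nlinarith [hmem.1]
        linarith
      have hfu : f u = f' u := hu ⟨hua, hub⟩
      have hfxu : f (x/u) = f' (x/u) := by
        by_contra hne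
        exact hN1 ⟨hu0, ⟨hne, ⟨hxua, hxub⟩⟩⟩
      rw [hfu, hfxu]
    simp only
    rw [hinner]
  rw [hL, hR, key a b ha hab f' hsm hint' s]
end
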